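/- A graph U satisfies that both U and its complement are claw-free if and only if for every 4-tuple (x, y, a, b) of distinct vertices of U, the conditions U({x,a}) = U({x,b}), U({y,a}) = U({y,b}) and U({x,a}) ≠ U({y,a}) imply U({x,y}) = U({a,b}), where for an unordered pair e of distinct vertices one sets U(e) = 1 if e is an edge of U and U(e) = 0 otherwise. -/

import Mathlib

open SimpleGraph

/-- The claw `K_{1,3}`: vertex 0 joined to each of the pairwise
    nonadjacent vertices 1, 2, 3. -/
def claw : SimpleGraph (Fin 4) := SimpleGraph.fromRel (fun a _ => a = 0)

/-- A graph is claw-free if it has no induced subgraph isomorphic to `K_{1,3}`. -/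
def ClawFree {V : Type*} (G : SimpleGraph V) : Prop := IsEmpty (claw ↪g G)

/-!
A four-vertex configuration violating the condition has `x` adjacent to `a, b` and `y` adjacent to
neither (up to swapping `x, y`), with `xy` and `ab` of different types. If `xy` is an edge it is a
claw of `U` centred at `x` with leaves `y, a, b`; otherwise it is a claw of `Uᶜ` centred at `y`
with leaves `x, a, b`. Conversely a claw of `U` centred at `c` with leaves `a, b, d` violates the
condition at `(c, a, b, d)`, and claws of `Uᶜ` are handled by noting that the condition is
invariant under complementation.
-/

lemma claw_adj {i j : Fin 4} : claw.Adj i j ↔ i ≠ j ∧ (i = 0 ∨ j = 0) := by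
  simp [claw, fromRel_adj]

section

variable {V : Type*} {G : SimpleGraph V}

lemma nonempty_claw_embedding_iff :
    Nonempty (claw ↪g G) ↔ ∃ c a b d : V, a ≠ b ∧ a ≠ d ∧ b ≠ d ∧
      G.Adj c a ∧ G.Adj c b ∧ G.Adj c d ∧ ¬G.Adj a b ∧ ¬G.Adj a d ∧ ¬G.Adj b d := by
  constructor
  · rintro ⟨e⟩
    refine ⟨e 0, e 1, e 2, e 3, ?_⟩
    simp only [ne_eq, e.injective.eq_iff, e.map_adj_iff, claw_adj]
    decide
  · rintro ⟨c, a, b, d, hab, had, hbd, hca, hcb, hcd, nab, nad, nbd⟩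
    refine ⟨⟨⟨![c, a, b, d], ?_⟩, ?_⟩⟩
    · intro i j hij
      fin_cases i <;> fin_cases j <;> simp_all [eq_comm, hca.ne, hcb.ne, hcd.ne]
    · intro i j
      change G.Adj (![c, a, b, d] i) (![c, a, b, d] j) ↔ claw.Adj i j
      fin_cases i <;> fin_cases j <;> simp_all [claw_adj, adj_comm]

lemma clawFree_iff : ClawFree G ↔ ∀ c a b d : V, a ≠ b → a ≠ d → b ≠ d →
    G.Adj c a → G.Adj c b → G.Adj c d → G.Adj a b ∨ G.Adj a d ∨ G.Adj b d := by
  rw [ClawFree, ← not_nonempty_iff, nonempty_claw_embedding_iff]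
  grind

def FourVertexCondition (G : SimpleGraph V) : Prop :=
  ∀ x y a b : V, x ≠ y → x ≠ a → x ≠ b → y ≠ a → y ≠ b → a ≠ b →
    (G.Adj x a ↔ G.Adj x b) → (G.Adj y a ↔ G.Adj y b) →
    ¬ (G.Adj x a ↔ G.Adj y a) → (G.Adj x y ↔ G.Adj a b)

lemma adj_iff_adj_of_clawFree (hG : ClawFree G) (hGc : ClawFree Gᶜ) {x y a b : V}
    (hxy : x ≠ y) (hya : y ≠ a) (hyb : y ≠ b) (hab : a ≠ b)
    (hxa : G.Adj x a) (hxb : G.Adj x b) (nya : ¬G.Adj y a) (nyb : ¬G.Adj y b) :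
    G.Adj x y ↔ G.Adj a b := by
  rw [clawFree_iff] at hG hGc
  constructor
  · intro hxy'
    simpa [nya, nyb] using hG x y a b hya hyb hab hxy' hxa hxb
  · intro hab'
    by_contra nxy
    simpa [compl_adj, hxa.ne, hxb.ne, hab, hab', hxa, hxb, adj_comm] using
      hGc y x a b hxa.ne hxb.ne hab ⟨hxy.symm, fun h => nxy h.symm⟩
        ⟨hya, nya⟩ ⟨hyb, nyb⟩

lemma ClawFree.fourVertexCondition (hG : ClawFree G) (hGc : ClawFree Gᶜ) :
    FourVertexCondition G := by
  intro x y a b hxy hxa hxb hya hyb hab hx hy hdiff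
  by_cases hxa' : G.Adj x a
  · exact adj_iff_adj_of_clawFree hG hGc hxy hya hyb hab hxa' (hx.1 hxa')
      (fun h => hdiff (iff_of_true hxa' h)) (fun h => hdiff (iff_of_true hxa' (hy.2 h)))
  · have hya' : G.Adj y a := by tauto
    rw [adj_comm]
    exact adj_iff_adj_of_clawFree hG hGc hxy.symm hxa hxb hab hya' (hy.1 hya') hxa'
      (fun h => hxa' (hx.2 h))

lemma FourVertexCondition.clawFree (h : FourVertexCondition G) : ClawFree G := by
  rw [clawFree_iff]
  intro c a b d hab had hbd hca hcb hcd
  by_contra! hn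
  exact hn.2.2 <| (h c a b d hca.ne hcb.ne hcd.ne hab had hbd (iff_of_true hcb hcd)
    (iff_of_false hn.1 hn.2.1) (fun h => hn.1 (h.1 hcb))).1 hca

lemma FourVertexCondition.compl (h : FourVertexCondition G) : FourVertexCondition Gᶜ := by
  intro x y a b hxy hxa hxb hya hyb hab
  simp only [compl_adj, ne_eq, hxy, hxa, hxb, hya, hyb, hab, not_false_eq_true, true_and,
    not_iff_not]
  exact h x y a b hxy hxa hxb hya hyb hab

end

theorem clawfree_both_iff_syntactic_general {V : Type*} (U : SimpleGraph V) :
    (ClawFree U ∧ ClawFree Uᶜ) ↔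
      ∀ x y a b : V, x ≠ y → x ≠ a → x ≠ b → y ≠ a → y ≠ b → a ≠ b →
        (U.Adj x a ↔ U.Adj x b) → (U.Adj y a ↔ U.Adj y b) →
        ¬ (U.Adj x a ↔ U.Adj y a) → (U.Adj x y ↔ U.Adj a b) :=
  ⟨fun h => h.1.fourVertexCondition h.2, fun h => ⟨FourVertexCondition.clawFree h,
    FourVertexCondition.clawFree (FourVertexCondition.compl h)⟩⟩

/-- `U` and its complement are both claw-free iff for every 4-tuple
    `(x, y, a, b)` of distinct vertices, `U({x,a}) = U({x,b})`,
    `U({y,a}) = U({y,b})` and `U({x,a}) ≠ U({y,a})` imply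
    `U({x,y}) = U({a,b})`. -/
theorem clawfree_both_iff_syntactic {V : Type*} [Fintype V] (U : SimpleGraph V) :
    (ClawFree U ∧ ClawFree Uᶜ) ↔
      ∀ x y a b : V, x ≠ y → x ≠ a → x ≠ b → y ≠ a → y ≠ b → a ≠ b →
        (U.Adj x a ↔ U.Adj x b) → (U.Adj y a ↔ U.Adj y b) →
        ¬ (U.Adj x a ↔ U.Adj y a) → (U.Adj x y ↔ U.Adj a b) :=
  clawfree_both_iff_syntactic_general U
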